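/- arXiv:2508.07439 — 2 statements merged into one kernel-verified Lean document; each statement's English description precedes it below -/
import Mathlib

section
/- Let H be a Hilbert space, a > 0, and suppose (q_n) is a sequence of bounded measurable functions on 𝕋², uniformly bounded in L∞, converging pointwise a.e. to q ∈ L∞. Let T_{q_n}u = (1+B²)u + B𝑃(q_n u^⊥) on the space H of divergence-free L² vector fields. Then for every u ∈ H, T_{q_n}^{-1}u converges strongly in L² to T_q^{-1}u. -/
open MeasureTheory Filter

/-- The 2-torus. -/
abbrev T2 := AddCircle (1 : ℝ) × AddCircle (1 : ℝ)

/-- L² vector fields on the torus. -/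
noncomputable abbrev V2 := Lp (EuclideanSpace ℝ (Fin 2)) 2 (volume : Measure T2)

/-- Pointwise rotation `v ↦ v^⊥ = (-v₂, v₁)`. -/
noncomputable def perp : EuclideanSpace ℝ (Fin 2) →L[ℝ] EuclideanSpace ℝ (Fin 2) :=
  LinearMap.toContinuousLinearMap
    { toFun := fun v => (WithLp.toLp 2 ![-(v 1), v 0] : EuclideanSpace ℝ (Fin 2))
      map_add' := by
        intro u v
        ext i
        fin_cases i <;>
          simp [Matrix.cons_val_zero, Matrix.cons_val_one, Matrix.head_cons] <;> ring
      map_smul' := by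
        intro c v
        ext i
        fin_cases i <;>
          simp [Matrix.cons_val_zero, Matrix.cons_val_one, Matrix.head_cons] }

/-- `u ↦ u^⊥` on L² vector fields. -/
noncomputable def perpL : V2 →L[ℝ] V2 := perp.compLpL 2 volume

/-! Since `T_{q_n}⁻¹` is a left inverse of `T_{q_n}` and `T_q⁻¹` a right inverse of `T_q`,
`T_{q_n}⁻¹ u - T_q⁻¹ u = T_{q_n}⁻¹ ((T_q - T_{q_n}) T_q⁻¹ u)`; as the `T_{q_n}⁻¹` are uniformly
bounded, it suffices that `T_{q_n} w → T_q w` for `w = T_q⁻¹ u`, i.e. that `(q_n - q) w^⊥ → 0`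
in `L²`. This is dominated convergence, with dominating function `2M |w^⊥|`. -/

open Topology
open scoped ENNReal

section DominatedConvergence

variable {α E : Type*} [MeasurableSpace α] {μ : Measure α} [NormedAddCommGroup E] {p : ℝ≥0∞}

theorem tendsto_eLpNorm_zero_of_dominated {F : ℕ → α → E} {g : α → ℝ} (hp : p ≠ ∞)
    (hF : ∀ n, AEStronglyMeasurable (F n) μ) (hg : MemLp g p μ)
    (h_bound : ∀ n, ∀ᵐ x ∂μ, ‖F n x‖ ≤ g x)
    (h_lim : ∀ᵐ x ∂μ, Tendsto (fun n => F n x) atTop (𝓝 0)) :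
    Tendsto (fun n => eLpNorm (F n) p μ) atTop (𝓝 0) := by
  rcases eq_or_ne p 0 with rfl | hp0
  · simp
  have hp_pos : 0 < p.toReal := ENNReal.toReal_pos hp0 hp
  simp only [eLpNorm_eq_lintegral_rpow_enorm_toReal hp0 hp]
  have h_lint : Tendsto (fun n => ∫⁻ x, ‖F n x‖ₑ ^ p.toReal ∂μ) atTop (𝓝 0) := by
    have h_fin : ∫⁻ x, ‖g x‖ₑ ^ p.toReal ∂μ ≠ ∞ :=
      (lintegral_rpow_enorm_lt_top_of_eLpNorm_lt_top hp0 hp hg.eLpNorm_lt_top).ne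
    have h_bound' : ∀ n, (fun x => ‖F n x‖ₑ ^ p.toReal) ≤ᵐ[μ] fun x => ‖g x‖ₑ ^ p.toReal := by
      intro n
      filter_upwards [h_bound n] with x hx
      gcongr
      exact enorm_le_iff_norm_le.mpr (hx.trans (Real.le_norm_self _))
    have h_lim' : ∀ᵐ x ∂μ, Tendsto (fun n => ‖F n x‖ₑ ^ p.toReal) atTop (𝓝 0) := by
      filter_upwards [h_lim] with x hx
      simpa [Function.comp_def, ENNReal.zero_rpow_of_pos hp_pos] using
        ((ENNReal.continuous_rpow_const (y := p.toReal)).tendsto _).comp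
          ((continuous_enorm.tendsto _).comp hx)
    simpa using tendsto_lintegral_of_dominated_convergence' _
      (fun n => (hF n).enorm.pow_const _) h_bound' h_fin h_lim'
  simpa [Function.comp_def, ENNReal.zero_rpow_of_pos (inv_pos.mpr hp_pos)] using
    ((ENNReal.continuous_rpow_const (y := 1 / p.toReal)).tendsto _).comp h_lint

end DominatedConvergence

namespace MeasureTheory.Lp

variable {α E : Type*} [MeasurableSpace α] {μ : Measure α} [NormedAddCommGroup E]
  [NormedSpace ℝ E] {p : ℝ≥0∞} [Fact (1 ≤ p)]

theorem tendsto_of_ae_eq_smul (hp : p ≠ ∞) {c : ℕ → α → ℝ} {c₀ : α → ℝ} {M : ℝ} {v : α → E}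
    (hv : MemLp v p μ) {w : ℕ → Lp E p μ} {w₀ : Lp E p μ}
    (hw : ∀ n, w n =ᵐ[μ] fun x => c n x • v x) (hw₀ : w₀ =ᵐ[μ] fun x => c₀ x • v x)
    (hc : ∀ n, ∀ᵐ x ∂μ, |c n x| ≤ M) (hc₀ : ∀ᵐ x ∂μ, |c₀ x| ≤ M)
    (h_lim : ∀ᵐ x ∂μ, Tendsto (fun n => c n x) atTop (𝓝 (c₀ x))) :
    Tendsto w atTop (𝓝 w₀) := by
  rw [tendsto_Lp_iff_tendsto_eLpNorm']
  refine tendsto_eLpNorm_zero_of_dominated hp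
    (fun n => (Lp.aestronglyMeasurable _).sub (Lp.aestronglyMeasurable _))
    (hv.norm.const_mul (2 * M)) (fun n => ?_) ?_
  · filter_upwards [hw n, hw₀, hc n, hc₀] with x hwx hw₀x hcx hc₀x
    rw [Pi.sub_apply, hwx, hw₀x, ← sub_smul, norm_smul, Real.norm_eq_abs]
    gcongr
    linarith [abs_sub (c n x) (c₀ x)]
  · filter_upwards [ae_all_iff.2 hw, hw₀, h_lim] with x hwx hw₀x hx
    simp only [Pi.sub_apply, hwx, hw₀x, ← sub_smul]
    simpa using (hx.sub_const (c₀ x)).smul_const (v x)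

end MeasureTheory.Lp

section

variable {𝕜 E F : Type*} [NontriviallyNormedField 𝕜] [NormedAddCommGroup E] [NormedSpace 𝕜 E]
  [NormedAddCommGroup F] [NormedSpace 𝕜 F]

theorem tendsto_inverse_apply_of_tendsto_apply {T : ℕ → E →L[𝕜] F} {T₀ : E →L[𝕜] F}
    {S : ℕ → F →L[𝕜] E} {S₀ : F →L[𝕜] E} {C : ℝ} (hS : ∀ n x, S n (T n x) = x)
    (hS₀ : ∀ y, T₀ (S₀ y) = y) (hC : ∀ n, ‖S n‖ ≤ C) (u : F)
    (hT : Tendsto (fun n => T n (S₀ u)) atTop (𝓝 (T₀ (S₀ u)))) :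
    Tendsto (fun n => S n u) atTop (𝓝 (S₀ u)) := by
  have h_diff : ∀ n, S n u - S₀ u = S n (T₀ (S₀ u) - T n (S₀ u)) := by
    intro n
    rw [map_sub, hS, hS₀]
  have hT' : Tendsto (fun n => ‖T₀ (S₀ u) - T n (S₀ u)‖) atTop (𝓝 0) := by
    simpa [norm_sub_rev] using tendsto_iff_norm_sub_tendsto_zero.1 hT
  rw [tendsto_iff_norm_sub_tendsto_zero]
  refine squeeze_zero (fun n => norm_nonneg _) (fun n => ?_) (by simpa using hT'.const_mul C)
  rw [h_diff]
  exact (S n).le_of_opNorm_le (hC n) _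

end

theorem stmt3_general (B : ℝ)
    (P : V2 →L[ℝ] V2)   -- the Leray projector
    (mul : (T2 → ℝ) → V2 →L[ℝ] V2)          -- multiplication by a bounded function
    (hmul : ∀ (p : T2 → ℝ) (u : V2),
      (mul p u : T2 → EuclideanSpace ℝ (Fin 2)) =ᵐ[volume]
        fun x => p x • (u : T2 → EuclideanSpace ℝ (Fin 2)) x)
    (qn : ℕ → T2 → ℝ) (q : T2 → ℝ) (M : ℝ)
    (hqn_bdd : ∀ n, ∀ᵐ x ∂(volume : Measure T2), |qn n x| ≤ M)
    (hq_bdd : ∀ᵐ x ∂(volume : Measure T2), |q x| ≤ M)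
    (hae : ∀ᵐ x ∂(volume : Measure T2), Tendsto (fun n => qn n x) atTop (nhds (q x)))
    -- the operators T_p = (1+B²)•I + B•𝑃 ∘ (multiplication by p) ∘ ⊥ :
    (Top : (T2 → ℝ) → V2 →L[ℝ] V2)
    (hTop : ∀ p : T2 → ℝ, Top p
      = (1 + B ^ 2) • (1 : V2 →L[ℝ] V2) + B • (P.comp ((mul p).comp perpL)))
    -- the inverses, with the norm bound `‖T_p⁻¹‖ ≤ (1+B²)⁻¹` :
    (S : ℕ → V2 →L[ℝ] V2) (Sinf : V2 →L[ℝ] V2)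
    (hSl : ∀ n, S n * Top (qn n) = 1)
    (hSinfr : Top q * Sinf = 1)
    (hSnorm : ∀ n, ‖S n‖ ≤ (1 + B ^ 2)⁻¹) :
    ∀ u : V2, Tendsto (fun n => S n u) atTop (nhds (Sinf u)) := by
  intro u
  have h_mul : ∀ v : V2, Tendsto (fun n => mul (qn n) v) atTop (𝓝 (mul q v)) := fun v =>
    Lp.tendsto_of_ae_eq_smul ENNReal.ofNat_ne_top (Lp.memLp v) (fun n => hmul (qn n) v)
      (hmul q v) hqn_bdd hq_bdd hae
  have h_Top : Tendsto (fun n => Top (qn n) (Sinf u)) atTop (𝓝 (Top q (Sinf u))) := by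
    simp only [hTop]
    exact (((P.continuous.tendsto _).comp (h_mul _)).const_smul B).const_add _
  exact tendsto_inverse_apply_of_tendsto_apply (fun n => DFunLike.congr_fun (hSl n))
    (DFunLike.congr_fun hSinfr) hSnorm u h_Top

/-- if `(q_n)` is uniformly bounded in `L∞` and converges a.e. to `q`,
and `T_p u = (1+B²) u + B 𝑃(p u^⊥)` (with `𝑃` the Leray projector), then for every `u`,
`T_{q_n}⁻¹ u → T_q⁻¹ u` strongly in `L²`. -/
theorem stmt3 (B : ℝ) (hB : 0 ≤ B)
    (P : V2 →L[ℝ] V2) (hPnorm : ‖P‖ ≤ 1)   -- the Leray projector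
    (mul : (T2 → ℝ) → V2 →L[ℝ] V2)          -- multiplication by a bounded function
    (hmul : ∀ (p : T2 → ℝ) (u : V2),
      (mul p u : T2 → EuclideanSpace ℝ (Fin 2)) =ᵐ[volume]
        fun x => p x • (u : T2 → EuclideanSpace ℝ (Fin 2)) x)
    (qn : ℕ → T2 → ℝ) (q : T2 → ℝ) (M : ℝ)
    (hqn_meas : ∀ n, AEStronglyMeasurable (qn n) volume)
    (hq_meas : AEStronglyMeasurable q volume)
    (hqn_bdd : ∀ n, ∀ᵐ x ∂(volume : Measure T2), |qn n x| ≤ M)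
    (hq_bdd : ∀ᵐ x ∂(volume : Measure T2), |q x| ≤ M)
    (hae : ∀ᵐ x ∂(volume : Measure T2), Tendsto (fun n => qn n x) atTop (nhds (q x)))
    -- the operators T_p = (1+B²)•I + B•𝑃 ∘ (multiplication by p) ∘ ⊥ :
    (Top : (T2 → ℝ) → V2 →L[ℝ] V2)
    (hTop : ∀ p : T2 → ℝ, Top p
      = (1 + B ^ 2) • (1 : V2 →L[ℝ] V2) + B • (P.comp ((mul p).comp perpL)))
    -- the inverses, with the norm bound `‖T_p⁻¹‖ ≤ (1+B²)⁻¹` :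
    (S : ℕ → V2 →L[ℝ] V2) (Sinf : V2 →L[ℝ] V2)
    (hSl : ∀ n, S n * Top (qn n) = 1) (hSr : ∀ n, Top (qn n) * S n = 1)
    (hSinfl : Sinf * Top q = 1) (hSinfr : Top q * Sinf = 1)
    (hSnorm : ∀ n, ‖S n‖ ≤ (1 + B ^ 2)⁻¹) (hSinfnorm : ‖Sinf‖ ≤ (1 + B ^ 2)⁻¹) :
    ∀ u : V2, Tendsto (fun n => S n u) atTop (nhds (Sinf u)) :=
  stmt3_general B P mul hmul qn q M hqn_bdd hq_bdd hae Top hTop S Sinf hSl hSinfr hSnorm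
end

section
/- Let y : [0, ∞) → [0, ∞) be a C¹ function satisfying y'(t) + y(t) ≤ K y(t)² for all t ≥ 0, where K > 0 is constant. If y(0) ≤ 1/(3K), then y(t) ≤ y(0)e^{-t/2} for all t ≥ 0. -/
/-- ODE/bootstrap lemma.  If `y : [0,∞) → [0,∞)` is `C¹` with
`y' + y ≤ K y²`, `K > 0`, and `y(0) ≤ 1/(3K)`, then `y(t) ≤ y(0) e^{-t/2}`. -/
theorem stmt10 (K : ℝ) (hK : 0 < K) (y y' : ℝ → ℝ)
    (hy_deriv : ∀ t, 0 ≤ t → HasDerivAt y (y' t) t)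
    (hy'_cont : ContinuousOn y' (Set.Ici (0 : ℝ)))
    (hy_nonneg : ∀ t, 0 ≤ t → 0 ≤ y t)
    (hineq : ∀ t, 0 ≤ t → y' t + y t ≤ K * (y t) ^ 2)
    (h0 : y 0 ≤ 1 / (3 * K)) :
    ∀ t, 0 ≤ t → y t ≤ y 0 * Real.exp (-t / 2) := by
  intro t ht
  have hycont : ∀ b : ℝ, ContinuousOn y (Set.Icc 0 b) := by
    intro b x hx
    exact (hy_deriv x hx.1).continuousAt.continuousWithinAt
  -- Step 1: y s ≤ 1/(2K) for all s ≥ 0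
  have step1 : ∀ s : ℝ, 0 ≤ s → y s ≤ 1 / (2 * K) := by
    intro s hs
    have := image_le_of_deriv_right_lt_deriv_boundary (f := y) (f' := y')
      (a := 0) (b := s) (B := fun _ => 1 / (2 * K)) (B' := fun _ => 0)
      (hycont s)
      (fun x hx => (hy_deriv x hx.1).hasDerivWithinAt)
      (by
        calc y 0 ≤ 1 / (3 * K) := h0
        _ ≤ 1 / (2 * K) := by
            apply one_div_le_one_div_of_le (by linarith) (by linarith))
      (fun x => hasDerivAt_const x _)
      (by
        intro x hx heq
        have h1 := hineq x hx.1
        have : y' x ≤ K * (y x) ^ 2 - y x := by linarith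
        have hKne : K ≠ 0 := ne_of_gt hK
        have hval : K * (y x) ^ 2 - y x = -(1 / (4 * K)) := by
          rw [heq]; field_simp; ring
        have : y' x ≤ -(1 / (4 * K)) := by linarith [hval ▸ this]
        have hpos : 0 < 1 / (4 * K) := by positivity
        calc y' x ≤ -(1 / (4 * K)) := this
        _ < 0 := by linarith)
    exact this ⟨hs, le_refl s⟩
  -- Step 2: Gronwall with rate -1/2
  have step2 := le_gronwallBound_of_liminf_deriv_right_le (f := y) (f' := y')
    (δ := y 0) (K := -(1/2 : ℝ)) (ε := 0) (a := 0) (b := t)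
    (hycont t)
    (fun x hx r hr => ((hy_deriv x hx.1).hasDerivWithinAt.liminf_right_slope_le hr))
    (le_refl _)
    (by
      intro x hx
      have h1 := hineq x hx.1
      have h2 := step1 x hx.1
      have h3 := hy_nonneg x hx.1
      have : K * (y x) ^ 2 ≤ (1/2) * y x := by
        have : K * (y x) ^ 2 = (K * y x) * y x := by ring
        rw [this]
        apply mul_le_mul_of_nonneg_right _ h3
        calc K * y x ≤ K * (1 / (2 * K)) := by
              exact mul_le_mul_of_nonneg_left h2 (le_of_lt hK)
        _ = 1/2 := by field_simp
      linarith)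
  have := step2 t ⟨ht, le_refl t⟩
  rw [sub_zero, gronwallBound_ε0] at this
  convert this using 2
  ring
end
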